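/- arXiv:0712.3425 — 5 statements merged into one kernel-verified Lean document; each statement's English description precedes it below -/
import Mathlib

section
/- For all real constants c₁, c₂, the function u : ℝ² → ℝ defined by u(t,x) = c₁·exp(t−x) + c₂·exp(t+x) + c₁² + c₂² satisfies the heat equation ∂_t u = ∂_x² u everywhere, and also satisfies the nonlinear first-order constraint ((∂_t u)² + (∂_x u)²)·cosh(2x) − 2·(∂_t u)·(∂_x u)·sinh(2x) + 2·exp(2t)·(∂_t u − u) = 0 everywhere. (This exhibits a nonlinear compatible differential constraint for a linear second-order PDE, contradicting Olver's claim that compatible constraints of linear second-order equations must be linear.) -/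
/-!
Put `a = c₁ e^{t-x}` and `b = c₂ e^{t+x}`. Both exponentials solve the heat equation, so
`u_t = u_xx = a + b` and `u_x = b - a`. Since `cosh y ± sinh y = e^{±y}`, the quadratic part of the
constraint equals `((u_t - u_x)² e^{2x} + (u_t + u_x)² e^{-2x}) / 2 = 2 (a² e^{2x} + b² e^{-2x})
= 2 (c₁² + c₂²) e^{2t}`, which is cancelled by `2 e^{2t} (u_t - u) = -2 e^{2t} (c₁² + c₂²)`.
-/

open Real

namespace HeatConstraint

noncomputable def expSol (c₁ c₂ t x : ℝ) : ℝ := c₁ * exp (t - x) + c₂ * exp (t + x)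

lemma hasDerivAt_expSol_time (c₁ c₂ t x : ℝ) :
    HasDerivAt (fun s => expSol c₁ c₂ s x) (expSol c₁ c₂ t x) t := by
  have h₁ := ((hasDerivAt_id' t).sub_const x).exp.const_mul c₁
  have h₂ := ((hasDerivAt_id' t).add_const x).exp.const_mul c₂
  unfold expSol
  exact (h₁.add h₂).congr_deriv (by ring)

lemma hasDerivAt_expSol_space (c₁ c₂ t x : ℝ) :
    HasDerivAt (fun y => expSol c₁ c₂ t y) (expSol (-c₁) c₂ t x) x := by
  have h₁ := ((hasDerivAt_id' x).const_sub t).exp.const_mul c₁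
  have h₂ := ((hasDerivAt_id' x).const_add t).exp.const_mul c₂
  unfold expSol
  exact (h₁.add h₂).congr_deriv (by ring)

lemma deriv_expSol_space (c₁ c₂ t : ℝ) :
    deriv (fun y => expSol c₁ c₂ t y) = fun y => expSol (-c₁) c₂ t y :=
  funext fun y => (hasDerivAt_expSol_space c₁ c₂ t y).deriv

lemma sq_mul_cosh_sub_mul_sinh (p q y : ℝ) :
    (p ^ 2 + q ^ 2) * cosh y - 2 * p * q * sinh y
      = ((p - q) ^ 2 * exp y + (p + q) ^ 2 * exp (-y)) / 2 := by
  rw [cosh_eq, sinh_eq]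
  ring

lemma expSol_sub_sq_add_add_sq (c₁ c₂ t x : ℝ) :
    (expSol c₁ c₂ t x - expSol (-c₁) c₂ t x) ^ 2 * exp (2 * x)
      + (expSol c₁ c₂ t x + expSol (-c₁) c₂ t x) ^ 2 * exp (-(2 * x))
      = 4 * (c₁ ^ 2 + c₂ ^ 2) * exp (2 * t) := by
  have h₁ : exp (t - x) ^ 2 * exp (2 * x) = exp (2 * t) := by
    rw [← exp_nat_mul, ← exp_add]; ring_nf
  have h₂ : exp (t + x) ^ 2 * exp (-(2 * x)) = exp (2 * t) := by
    rw [← exp_nat_mul, ← exp_add]; ring_nf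
  simp only [expSol]
  linear_combination (4 * c₁ ^ 2) * h₁ + (4 * c₂ ^ 2) * h₂

end HeatConstraint

open HeatConstraint in
/-- For all constants `c₁, c₂`, the function
`u(t,x) = c₁·exp(t−x) + c₂·exp(t+x) + c₁² + c₂²` satisfies the heat equation
`∂_t u = ∂_x² u` and the nonlinear first-order constraint
`(u_t² + u_x²)·cosh(2x) − 2·u_t·u_x·sinh(2x) + 2·e^{2t}·(u_t − u) = 0`. -/
theorem stmt_2 (c₁ c₂ : ℝ)
    (u : ℝ → ℝ → ℝ)
    (hu : ∀ t x : ℝ, u t x = c₁ * Real.exp (t - x) + c₂ * Real.exp (t + x) + c₁ ^ 2 + c₂ ^ 2) :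
    ∀ t x : ℝ,
      deriv (fun s => u s x) t = deriv (deriv (fun y => u t y)) x ∧
      ((deriv (fun s => u s x) t) ^ 2 + (deriv (fun y => u t y) x) ^ 2)
          * Real.cosh (2 * x)
        - 2 * (deriv (fun s => u s x) t) * (deriv (fun y => u t y) x)
          * Real.sinh (2 * x)
        + 2 * Real.exp (2 * t) * (deriv (fun s => u s x) t - u t x) = 0 := by
  intro t x
  have hu' : u = fun t x => expSol c₁ c₂ t x + c₁ ^ 2 + c₂ ^ 2 := funext₂ hu
  have hut : deriv (fun s => u s x) t = expSol c₁ c₂ t x := by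
    simp only [hu', add_assoc, deriv_add_const, (hasDerivAt_expSol_time c₁ c₂ t x).deriv]
  have hux : deriv (fun y => u t y) = fun y => expSol (-c₁) c₂ t y := by
    simp only [hu', add_assoc, deriv_add_const', deriv_expSol_space]
  have huxx : deriv (deriv (fun y => u t y)) x = expSol c₁ c₂ t x := by
    rw [hux, deriv_expSol_space, neg_neg]
  refine ⟨hut.trans huxx.symm, ?_⟩
  rw [hut, hux, sq_mul_cosh_sub_mul_sinh, expSol_sub_sq_add_add_sq, hu']
  ring
end

section
/- For every real constant c, the function u : ℝ² → ℝ defined by u(t,x) = x³ + 6tx + c satisfies the heat equation ∂_t u = ∂_x² u, the differential constraint t·∂_t u − x·∂_x u + 3x³ = 0, and the projected compatibility condition ∂_t u − 6x = 0, at every point (t,x) ∈ ℝ². -/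
section CubicHeatPolynomial

variable (c t x : ℝ)

lemma hasDerivAt_cubicHeat_time :
    HasDerivAt (fun s : ℝ => x ^ 3 + 6 * s * x + c) (6 * x) t := by
  simpa using (((hasDerivAt_id t).const_mul 6).mul_const x).const_add (x ^ 3) |>.add_const c

lemma hasDerivAt_cubicHeat_space :
    HasDerivAt (fun y : ℝ => y ^ 3 + 6 * t * y + c) (3 * x ^ 2 + 6 * t) x := by
  simpa using ((hasDerivAt_pow 3 x).add ((hasDerivAt_id x).const_mul (6 * t))).add_const c

lemma deriv_cubicHeat_space :
    deriv (fun y : ℝ => y ^ 3 + 6 * t * y + c) = fun y => 3 * y ^ 2 + 6 * t :=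
  funext fun y => (hasDerivAt_cubicHeat_space c t y).deriv

lemma deriv_deriv_cubicHeat_space :
    deriv (deriv fun y : ℝ => y ^ 3 + 6 * t * y + c) x = 6 * x := by
  rw [deriv_cubicHeat_space]
  simp only [deriv_add_const, deriv_const_mul_field', deriv_pow_field]
  ring

end CubicHeatPolynomial

/-- For every constant `c`, the function `u(t,x) = x³ + 6tx + c`
satisfies the heat equation `∂_t u = ∂_x² u`, the Olver–Rosenau side condition
`t·∂_t u − x·∂_x u + 3x³ = 0`, and the projected condition `∂_t u − 6x = 0`. -/
theorem stmt_4 (c : ℝ) (u : ℝ → ℝ → ℝ)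
    (hu : ∀ t x : ℝ, u t x = x ^ 3 + 6 * t * x + c) :
    ∀ t x : ℝ,
      deriv (fun s => u s x) t = deriv (deriv (fun y => u t y)) x ∧
      t * deriv (fun s => u s x) t - x * deriv (fun y => u t y) x + 3 * x ^ 3 = 0 ∧
      deriv (fun s => u s x) t - 6 * x = 0 := by
  intro t x
  simp only [hu]
  have u_t := (hasDerivAt_cubicHeat_time c t x).deriv
  have u_x := (hasDerivAt_cubicHeat_space c t x).deriv
  have u_xx := deriv_deriv_cubicHeat_space c t x
  refine ⟨u_t.trans u_xx.symm, ?_, ?_⟩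
  · rw [u_t, u_x]; ring
  · rw [u_t]; ring
end

section
/- Let u : ℝ² → ℝ be of class C³ in the variables (t,x), satisfy the heat equation ∂_t u = ∂_x² u everywhere, and satisfy the multiplicative-separation constraint u·∂_t∂_x u = (∂_t u)·(∂_x u) everywhere. Then u also satisfies u·∂_t² u = (∂_t u)² everywhere. -/
/-- Partial derivative in the first variable `t`. -/
noncomputable def partialT (u : ℝ → ℝ → ℝ) : ℝ → ℝ → ℝ :=
  fun t x => deriv (fun s => u s x) t

/-- Partial derivative in the second variable `x`. -/
noncomputable def partialX (u : ℝ → ℝ → ℝ) : ℝ → ℝ → ℝ :=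
  fun t x => deriv (fun y => u t y) x

/-!
Differentiating the separation constraint `u u_tx = u_t u_x` in `x`, the terms `u_x u_tx` cancel
and leave `u u_txx = u_t u_xx`. By the heat equation and symmetry of second derivatives,
`u_tt = ∂_t u_xx = u_txx`, and `u_xx = u_t`, so `u u_tt = u_t²`.
-/

open Function

lemma fderiv_fderiv_apply_const {E F : Type*} [NormedAddCommGroup E] [NormedSpace ℝ E]
    [NormedAddCommGroup F] [NormedSpace ℝ F] {f : E → F} {p : E}
    (hf : DifferentiableAt ℝ (fderiv ℝ f) p) (v w : E) :
    fderiv ℝ (fun q => fderiv ℝ f q v) p w = fderiv ℝ (fderiv ℝ f) p w v := by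
  rw [(hf.hasFDerivAt.clm_apply (hasFDerivAt_const v p)).fderiv]
  simp

section PartialDerivatives

variable {u v : ℝ → ℝ → ℝ} {t x : ℝ}

lemma hasDerivAt_uncurry_left (h : DifferentiableAt ℝ (uncurry u) (t, x)) :
    HasDerivAt (fun s => u s x) (fderiv ℝ (uncurry u) (t, x) (1, 0)) t :=
  (h.hasFDerivAt.comp_hasDerivAt t ((hasDerivAt_id' t).prodMk (hasDerivAt_const t x)) :)

lemma hasDerivAt_uncurry_right (h : DifferentiableAt ℝ (uncurry u) (t, x)) :
    HasDerivAt (u t) (fderiv ℝ (uncurry u) (t, x) (0, 1)) x :=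
  (h.hasFDerivAt.comp_hasDerivAt x ((hasDerivAt_const x t).prodMk (hasDerivAt_id' x)) :)

lemma uncurry_partialT_eq_fderiv (h : Differentiable ℝ (uncurry u)) :
    uncurry (partialT u) = fun p => fderiv ℝ (uncurry u) p (1, 0) :=
  funext fun p => (hasDerivAt_uncurry_left (h p)).deriv

lemma uncurry_partialX_eq_fderiv (h : Differentiable ℝ (uncurry u)) :
    uncurry (partialX u) = fun p => fderiv ℝ (uncurry u) p (0, 1) :=
  funext fun p => (hasDerivAt_uncurry_right (h p)).deriv

lemma ContDiff.uncurry_partialT {n : ℕ} (h : ContDiff ℝ (n + 1) (uncurry u)) :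
    ContDiff ℝ n (uncurry (partialT u)) := by
  rw [uncurry_partialT_eq_fderiv (h.differentiable (by simp))]
  exact (h.fderiv_right le_rfl).clm_apply contDiff_const

lemma ContDiff.uncurry_partialX {n : ℕ} (h : ContDiff ℝ (n + 1) (uncurry u)) :
    ContDiff ℝ n (uncurry (partialX u)) := by
  rw [uncurry_partialX_eq_fderiv (h.differentiable (by simp))]
  exact (h.fderiv_right le_rfl).clm_apply contDiff_const

lemma ContDiff.differentiableAt_uncurry_right (h : ContDiff ℝ 1 (uncurry u)) (t x : ℝ) :
    DifferentiableAt ℝ (u t) x :=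
  (hasDerivAt_uncurry_right (h.differentiable one_ne_zero (t, x))).differentiableAt

lemma partialT_partialX_comm (h : ContDiff ℝ 2 (uncurry u)) :
    partialT (partialX u) = partialX (partialT u) := by
  funext t x
  have hd : Differentiable ℝ (uncurry u) := h.differentiable (by norm_num)
  have hdd : DifferentiableAt ℝ (fderiv ℝ (uncurry u)) (t, x) :=
    (h.fderiv_right (m := 1) le_rfl).differentiable one_ne_zero _
  have hTX := (hasDerivAt_uncurry_left
    ((ContDiff.uncurry_partialX (n := 1) h).differentiable one_ne_zero (t, x))).deriv
  have hXT := (hasDerivAt_uncurry_right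
    ((ContDiff.uncurry_partialT (n := 1) h).differentiable one_ne_zero (t, x))).deriv
  rw [uncurry_partialX_eq_fderiv hd, fderiv_fderiv_apply_const hdd] at hTX
  rw [uncurry_partialT_eq_fderiv hd, fderiv_fderiv_apply_const hdd] at hXT
  rw [partialT, hTX, partialX, hXT]
  exact (h.contDiffAt.isSymmSndFDerivAt (by simp)).eq _ _

lemma partialX_mul (hu : DifferentiableAt ℝ (u t) x) (hv : DifferentiableAt ℝ (v t) x) :
    partialX (u * v) t x = partialX u t x * v t x + u t x * partialX v t x :=
  deriv_fun_mul hu hv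

end PartialDerivatives

lemma mul_partialX_partialT_partialX_eq {u : ℝ → ℝ → ℝ} (hu : ContDiff ℝ 3 (uncurry u))
    (hG : u * partialT (partialX u) = partialT u * partialX u) :
    u * partialX (partialT (partialX u)) = partialT u * partialX (partialX u) := by
  have huX : ContDiff ℝ 2 (uncurry (partialX u)) := hu.uncurry_partialX
  have huT : ContDiff ℝ 2 (uncurry (partialT u)) := hu.uncurry_partialT
  funext t x
  have h := congrFun₂ (congrArg partialX hG) t x
  rw [partialX_mul ((hu.of_le (by norm_num)).differentiableAt_uncurry_right t x)
      ((ContDiff.uncurry_partialT (n := 1) huX).differentiableAt_uncurry_right t x),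
    partialX_mul ((huT.of_le one_le_two).differentiableAt_uncurry_right t x)
      ((huX.of_le one_le_two).differentiableAt_uncurry_right t x),
    ← partialT_partialX_comm (hu.of_le (by norm_num))] at h
  simp only [Pi.mul_apply]
  linarith

/-- A C³ solution of the heat equation `u_t = u_xx` which also
satisfies the multiplicative-separation constraint `u·u_tx = u_t·u_x`
satisfies in addition `u·u_tt = u_t²`. -/
theorem stmt_7 (u : ℝ → ℝ → ℝ)
    (hu : ContDiff ℝ 3 (fun p : ℝ × ℝ => u p.1 p.2))
    (heat : ∀ t x : ℝ, partialT u t x = partialX (partialX u) t x)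
    (hG : ∀ t x : ℝ,
      u t x * partialT (partialX u) t x = partialT u t x * partialX u t x) :
    ∀ t x : ℝ, u t x * partialT (partialT u) t x = (partialT u t x) ^ 2 := by
  have hu : ContDiff ℝ 3 (uncurry u) := hu
  have heat : partialT u = partialX (partialX u) := funext₂ heat
  have hutt : partialT (partialT u) = partialX (partialT (partialX u)) := by
    rw [heat]
    exact partialT_partialX_comm (ContDiff.uncurry_partialX (n := 2) hu)
  have key : u * partialT (partialT u) = partialT u ^ 2 := by
    rw [hutt, mul_partialX_partialT_partialX_eq hu (funext₂ hG), ← heat, sq]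
  exact fun t x => congrFun₂ key t x
end

section
/- Let f : ℝ → ℝ be of class C³ and let u : Ω → ℝ be of class C⁵ on an open set Ω ⊆ ℝ² (variables (t,x)), satisfying ∂_t u = ∂_x² u + f(u) on Ω. Define g : Ω → ℝ by g = (∂_x u)·(∂_x³ u) − (∂_x² u)² − f(u)·(∂_x² u) + f'(u)·(∂_x u)². Then at every point p ∈ Ω with ∂_x u(p) ≠ 0, the following identity holds: ∂_t g = ∂_x² g − (2·∂_x² u/∂_x u)·∂_x g + (2·f'(u) + 2·∂_x³ u/∂_x u)·g. (This expresses that g = 0 is a compatible differential constraint — an auxiliary integral — for the reaction–diffusion equation, for arbitrary f.) -/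
open Function

section PartialDerivatives

variable {w : ℝ → ℝ → ℝ} {t x : ℝ}

lemma hasDerivAt_fderiv_apply_snd (h : DifferentiableAt ℝ (uncurry w) (t, x)) :
    HasDerivAt (fun y => w t y) (fderiv ℝ (uncurry w) (t, x) (0, 1)) x :=
  h.hasFDerivAt.comp_hasDerivAt x ((hasDerivAt_const x t).prodMk (hasDerivAt_id x))

lemma hasDerivAt_fderiv_apply_fst (h : DifferentiableAt ℝ (uncurry w) (t, x)) :
    HasDerivAt (fun s => w s x) (fderiv ℝ (uncurry w) (t, x) (1, 0)) t :=
  h.hasFDerivAt.comp_hasDerivAt (f := fun s => (s, x)) t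
    ((hasDerivAt_id' t).prodMk (hasDerivAt_const t x))

lemma partialX_eq_fderiv (h : DifferentiableAt ℝ (uncurry w) (t, x)) :
    partialX w t x = fderiv ℝ (uncurry w) (t, x) (0, 1) :=
  (hasDerivAt_fderiv_apply_snd h).deriv

lemma partialT_eq_fderiv (h : DifferentiableAt ℝ (uncurry w) (t, x)) :
    partialT w t x = fderiv ℝ (uncurry w) (t, x) (1, 0) :=
  (hasDerivAt_fderiv_apply_fst h).deriv

variable {Ω : Set (ℝ × ℝ)} {n : WithTop ℕ∞}

lemma hasDerivAt_partialX (hΩ : IsOpen Ω) (hw : ContDiffOn ℝ n (uncurry w) Ω) (hn : n ≠ 0)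
    (hq : (t, x) ∈ Ω) : HasDerivAt (fun y => w t y) (partialX w t x) x := by
  have h := (hw.differentiableOn hn).differentiableAt (hΩ.mem_nhds hq)
  exact partialX_eq_fderiv h ▸ hasDerivAt_fderiv_apply_snd h

lemma hasDerivAt_partialT (hΩ : IsOpen Ω) (hw : ContDiffOn ℝ n (uncurry w) Ω) (hn : n ≠ 0)
    (hq : (t, x) ∈ Ω) : HasDerivAt (fun s => w s x) (partialT w t x) t := by
  have h := (hw.differentiableOn hn).differentiableAt (hΩ.mem_nhds hq)
  exact partialT_eq_fderiv h ▸ hasDerivAt_fderiv_apply_fst h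

lemma partialX_congr {w' : ℝ → ℝ → ℝ} (hΩ : IsOpen Ω)
    (h : ∀ s y, (s, y) ∈ Ω → w s y = w' s y) (hq : (t, x) ∈ Ω) :
    partialX w t x = partialX w' t x := by
  refine Filter.EventuallyEq.deriv_eq ?_
  have hc : Continuous fun y : ℝ => (t, y) := by fun_prop
  filter_upwards [(hΩ.preimage hc).mem_nhds hq] with y hy using h t y hy

lemma partialT_congr {w' : ℝ → ℝ → ℝ} (hΩ : IsOpen Ω)
    (h : ∀ s y, (s, y) ∈ Ω → w s y = w' s y) (hq : (t, x) ∈ Ω) :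
    partialT w t x = partialT w' t x := by
  refine Filter.EventuallyEq.deriv_eq ?_
  have hc : Continuous fun s : ℝ => (s, x) := by fun_prop
  filter_upwards [(hΩ.preimage hc).mem_nhds hq] with s hs using h s x hs

lemma contDiffOn_uncurry_partialX {m : WithTop ℕ∞} (hΩ : IsOpen Ω)
    (hw : ContDiffOn ℝ n (uncurry w) Ω) (hmn : m + 1 ≤ n) :
    ContDiffOn ℝ m (uncurry (partialX w)) Ω := by
  have hn : n ≠ 0 := by rintro rfl; simp at hmn
  refine ((hw.fderiv_of_isOpen hΩ hmn).clm_apply (contDiffOn_const (c := ((0, 1) : ℝ × ℝ))))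
    |>.congr fun ⟨s, y⟩ hq => ?_
  exact partialX_eq_fderiv ((hw.differentiableOn hn).differentiableAt (hΩ.mem_nhds hq))

lemma partialT_partialX_comm_s9 (hΩ : IsOpen Ω) (hw : ContDiffOn ℝ 2 (uncurry w) Ω)
    (hq : (t, x) ∈ Ω) : partialT (partialX w) t x = partialX (partialT w) t x := by
  set W := uncurry w
  have hW : ContDiffAt ℝ 2 W (t, x) := hw.contDiffAt (hΩ.mem_nhds hq)
  have hd : ∀ q ∈ Ω, DifferentiableAt ℝ W q := fun q hq =>
    (hw.differentiableOn two_ne_zero).differentiableAt (hΩ.mem_nhds hq)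
  have hdd : DifferentiableAt ℝ (fderiv ℝ W) (t, x) :=
    (hW.fderiv_right (m := 1) le_rfl).differentiableAt one_ne_zero
  -- both mixed partials are values of the symmetric second derivative `fderiv (fderiv W)`
  have hsecond : ∀ v v' : ℝ × ℝ, fderiv ℝ (fun q => fderiv ℝ W q v) (t, x) v' =
      fderiv ℝ (fderiv ℝ W) (t, x) v' v := fun v v' => by
    rw [fderiv_clm_apply hdd (differentiableAt_const v)]; simp
  rw [partialT_congr (w' := fun s y => fderiv ℝ W (s, y) (0, 1)) hΩ
      (fun s y hsy => partialX_eq_fderiv (hd _ hsy)) hq,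
    partialX_congr (w' := fun s y => fderiv ℝ W (s, y) (1, 0)) hΩ
      (fun s y hsy => partialT_eq_fderiv (hd _ hsy)) hq,
    partialT_eq_fderiv, partialX_eq_fderiv]
  · exact (hsecond _ _).trans ((hW.isSymmSndFDerivAt (by simp) _ _).trans (hsecond _ _).symm)
  all_goals exact hdd.clm_apply (differentiableAt_const _)

lemma partialT_partialX_eq_of_hasDerivAt {P : ℝ → ℝ → ℝ} {P' : ℝ} (hΩ : IsOpen Ω)
    (hw : ContDiffOn ℝ 2 (uncurry w) Ω) (hP : ∀ s y, (s, y) ∈ Ω → partialT w s y = P s y)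
    (hq : (t, x) ∈ Ω) (hd : HasDerivAt (fun y => P t y) P' x) :
    partialT (partialX w) t x = P' := by
  rw [partialT_partialX_comm_s9 hΩ hw hq, partialX_congr hΩ hP hq]
  exact hd.deriv

end PartialDerivatives

section AuxiliaryIntegral

variable {f a a₁ a₂ a₃ a₄ : ℝ → ℝ} {b b₁ b₂ b₃ b₄ y : ℝ}

lemma hasDerivAt_auxIntegral (hf : DifferentiableAt ℝ f (a y))
    (hf' : DifferentiableAt ℝ (deriv f) (a y)) (h : HasDerivAt a b y)
    (h₁ : HasDerivAt a₁ b₁ y) (h₂ : HasDerivAt a₂ b₂ y) (h₃ : HasDerivAt a₃ b₃ y) :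
    HasDerivAt (fun y => a₁ y * a₃ y - a₂ y ^ 2 - f (a y) * a₂ y + deriv f (a y) * a₁ y ^ 2)
      (b₁ * a₃ y + a₁ y * b₃ - 2 * a₂ y * b₂ - deriv f (a y) * b * a₂ y - f (a y) * b₂
        + deriv (deriv f) (a y) * b * a₁ y ^ 2 + 2 * deriv f (a y) * a₁ y * b₁) y := by
  have hfa := hf.hasDerivAt.comp y h
  have hf'a := hf'.hasDerivAt.comp y h
  refine ((((h₁.mul h₃).sub (h₂.pow 2)).sub (hfa.mul h₂)).add
    (hf'a.mul (h₁.pow 2))).congr_deriv ?_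
  simp only [Function.comp_apply, Pi.pow_apply, Nat.cast_ofNat]
  ring

/- The differentiated function is what `hasDerivAt_auxIntegral` yields along the chain
`a' = a₁, a₁' = a₂, a₂' = a₃, a₃' = a₄`, i.e. `∂ₓ G` in terms of the `x`-jet of `u`. -/
lemma hasDerivAt_auxIntegral_partialX (hf : DifferentiableAt ℝ f (a y))
    (hf' : DifferentiableAt ℝ (deriv f) (a y))
    (hf'' : DifferentiableAt ℝ (deriv (deriv f)) (a y))
    (h : HasDerivAt a b y) (h₁ : HasDerivAt a₁ b₁ y) (h₂ : HasDerivAt a₂ b₂ y)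
    (h₃ : HasDerivAt a₃ b₃ y) (h₄ : HasDerivAt a₄ b₄ y) :
    HasDerivAt (fun y => a₁ y * a₄ y - a₂ y * a₃ y + deriv f (a y) * a₁ y * a₂ y
        - f (a y) * a₃ y + deriv (deriv f) (a y) * a₁ y ^ 3)
      (b₁ * a₄ y + a₁ y * b₄ - b₂ * a₃ y - a₂ y * b₃
        + deriv (deriv f) (a y) * b * a₁ y * a₂ y + deriv f (a y) * b₁ * a₂ y
        + deriv f (a y) * a₁ y * b₂ - deriv f (a y) * b * a₃ y - f (a y) * b₃
        + deriv (deriv (deriv f)) (a y) * b * a₁ y ^ 3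
        + 3 * deriv (deriv f) (a y) * a₁ y ^ 2 * b₁) y := by
  have hfa := hf.hasDerivAt.comp y h
  have hf'a := hf'.hasDerivAt.comp y h
  have hf''a := hf''.hasDerivAt.comp y h
  refine (((((h₁.mul h₄).sub (h₂.mul h₃)).add ((hf'a.mul h₁).mul h₂)).sub (hfa.mul h₃)).add
    (hf''a.mul (h₁.pow 3))).congr_deriv ?_
  simp only [Function.comp_apply, Pi.pow_apply, Pi.mul_apply, Nat.cast_ofNat]
  ring

end AuxiliaryIntegral

noncomputable def auxIntegral (f : ℝ → ℝ) (u : ℝ → ℝ → ℝ) : ℝ → ℝ → ℝ :=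
  fun t x => partialX u t x * partialX (partialX (partialX u)) t x
    - partialX (partialX u) t x ^ 2 - f (u t x) * partialX (partialX u) t x
    + deriv f (u t x) * partialX u t x ^ 2

section ReactionDiffusion

variable {f : ℝ → ℝ} {Ω : Set (ℝ × ℝ)} {u : ℝ → ℝ → ℝ} {t x : ℝ}

lemma contDiffOn_uncurry_partialX_iterates (hΩ : IsOpen Ω)
    (hu : ContDiffOn ℝ 5 (uncurry u) Ω) :
    ContDiffOn ℝ 4 (uncurry (partialX u)) Ω
      ∧ ContDiffOn ℝ 3 (uncurry (partialX (partialX u))) Ω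
      ∧ ContDiffOn ℝ 2 (uncurry (partialX (partialX (partialX u)))) Ω
      ∧ ContDiffOn ℝ 1 (uncurry (partialX (partialX (partialX (partialX u))))) Ω := by
  have hu₁ := contDiffOn_uncurry_partialX hΩ hu (m := 4) (by norm_num)
  have hu₂ := contDiffOn_uncurry_partialX hΩ hu₁ (m := 3) (by norm_num)
  have hu₃ := contDiffOn_uncurry_partialX hΩ hu₂ (m := 2) (by norm_num)
  exact ⟨hu₁, hu₂, hu₃, contDiffOn_uncurry_partialX hΩ hu₃ (by norm_num)⟩

lemma partialT_partialX_of_reactionDiffusion (hf : ContDiff ℝ 3 f) (hΩ : IsOpen Ω)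
    (hu : ContDiffOn ℝ 5 (uncurry u) Ω)
    (heq : ∀ t x, (t, x) ∈ Ω → partialT u t x = partialX (partialX u) t x + f (u t x))
    (hq : (t, x) ∈ Ω) :
    partialT (partialX u) t x
      = partialX (partialX (partialX u)) t x + deriv f (u t x) * partialX u t x := by
  obtain ⟨-, hu₂, -, -⟩ := contDiffOn_uncurry_partialX_iterates hΩ hu
  exact partialT_partialX_eq_of_hasDerivAt hΩ (hu.of_le (by norm_num)) heq hq
    ((hasDerivAt_partialX hΩ hu₂ (by norm_num) hq).add
      ((hf.differentiable (by norm_num) _).hasDerivAt.comp x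
        (hasDerivAt_partialX hΩ hu (by norm_num) hq)))

lemma partialT_partialX_partialX_of_reactionDiffusion (hf : ContDiff ℝ 3 f) (hΩ : IsOpen Ω)
    (hu : ContDiffOn ℝ 5 (uncurry u) Ω)
    (heq : ∀ t x, (t, x) ∈ Ω → partialT u t x = partialX (partialX u) t x + f (u t x))
    (hq : (t, x) ∈ Ω) :
    partialT (partialX (partialX u)) t x
      = partialX (partialX (partialX (partialX u))) t x
        + deriv (deriv f) (u t x) * partialX u t x ^ 2
        + deriv f (u t x) * partialX (partialX u) t x := by
  obtain ⟨hu₁, -, hu₃, -⟩ := contDiffOn_uncurry_partialX_iterates hΩ hu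
  rw [partialT_partialX_eq_of_hasDerivAt hΩ (hu₁.of_le (by norm_num))
    (fun s y hq => partialT_partialX_of_reactionDiffusion hf hΩ hu heq hq) hq
    ((hasDerivAt_partialX hΩ hu₃ (by norm_num) hq).add
      ((((hf.of_le (by norm_num)).differentiable_deriv_two _).hasDerivAt.comp x
        (hasDerivAt_partialX hΩ hu (by norm_num) hq)).mul
        (hasDerivAt_partialX hΩ hu₁ (by norm_num) hq)))]
  simp only [Function.comp_apply]
  ring

lemma partialT_partialX_partialX_partialX_of_reactionDiffusion (hf : ContDiff ℝ 3 f)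
    (hΩ : IsOpen Ω) (hu : ContDiffOn ℝ 5 (uncurry u) Ω)
    (heq : ∀ t x, (t, x) ∈ Ω → partialT u t x = partialX (partialX u) t x + f (u t x))
    (hq : (t, x) ∈ Ω) :
    partialT (partialX (partialX (partialX u))) t x
      = partialX (partialX (partialX (partialX (partialX u)))) t x
        + deriv (deriv (deriv f)) (u t x) * partialX u t x ^ 3
        + 3 * deriv (deriv f) (u t x) * partialX u t x * partialX (partialX u) t x
        + deriv f (u t x) * partialX (partialX (partialX u)) t x := by
  obtain ⟨hu₁, hu₂, -, hu₄⟩ := contDiffOn_uncurry_partialX_iterates hΩ hu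
  have hf'' : Differentiable ℝ (deriv (deriv f)) := (hf.iterate_deriv' 1 2).differentiable_one
  have h := hasDerivAt_partialX hΩ hu (by norm_num) hq
  have h₁ := hasDerivAt_partialX hΩ hu₁ (by norm_num) hq
  rw [partialT_partialX_eq_of_hasDerivAt hΩ (hu₂.of_le (by norm_num))
    (fun s y hq => partialT_partialX_partialX_of_reactionDiffusion hf hΩ hu heq hq) hq
    (((hasDerivAt_partialX hΩ hu₄ (by norm_num) hq).add
      (((hf'' _).hasDerivAt.comp x h).mul (h₁.pow 2))).add
      ((((hf.of_le (by norm_num)).differentiable_deriv_two _).hasDerivAt.comp x h).mul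
        (hasDerivAt_partialX hΩ hu₂ (by norm_num) hq)))]
  simp only [Function.comp_apply, Pi.pow_apply, Nat.cast_ofNat]
  ring

lemma partialX_auxIntegral (hf : ContDiff ℝ 2 f) (hΩ : IsOpen Ω)
    (hu : ContDiffOn ℝ 5 (uncurry u) Ω) (hq : (t, x) ∈ Ω) :
    partialX (auxIntegral f u) t x
      = partialX u t x * partialX (partialX (partialX (partialX u))) t x
        - partialX (partialX u) t x * partialX (partialX (partialX u)) t x
        + deriv f (u t x) * partialX u t x * partialX (partialX u) t x
        - f (u t x) * partialX (partialX (partialX u)) t x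
        + deriv (deriv f) (u t x) * partialX u t x ^ 3 := by
  obtain ⟨hu₁, hu₂, hu₃, -⟩ := contDiffOn_uncurry_partialX_iterates hΩ hu
  refine (hasDerivAt_auxIntegral (hf.differentiable (by norm_num) _)
    (hf.differentiable_deriv_two _) (hasDerivAt_partialX hΩ hu (by norm_num) hq)
    (hasDerivAt_partialX hΩ hu₁ (by norm_num) hq) (hasDerivAt_partialX hΩ hu₂ (by norm_num) hq)
    (hasDerivAt_partialX hΩ hu₃ (by norm_num) hq)).deriv.trans ?_
  ring

lemma partialX_partialX_auxIntegral (hf : ContDiff ℝ 3 f) (hΩ : IsOpen Ω)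
    (hu : ContDiffOn ℝ 5 (uncurry u) Ω) (hq : (t, x) ∈ Ω) :
    partialX (partialX (auxIntegral f u)) t x
      = partialX u t x * partialX (partialX (partialX (partialX (partialX u)))) t x
        - partialX (partialX (partialX u)) t x ^ 2
        + 4 * deriv (deriv f) (u t x) * partialX u t x ^ 2 * partialX (partialX u) t x
        + deriv f (u t x) * partialX (partialX u) t x ^ 2
        - f (u t x) * partialX (partialX (partialX (partialX u))) t x
        + deriv (deriv (deriv f)) (u t x) * partialX u t x ^ 4 := by
  obtain ⟨hu₁, hu₂, hu₃, hu₄⟩ := contDiffOn_uncurry_partialX_iterates hΩ hu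
  have hf₂ : ContDiff ℝ 2 f := hf.of_le (by norm_num)
  have hf'' : Differentiable ℝ (deriv (deriv f)) := (hf.iterate_deriv' 1 2).differentiable_one
  rw [partialX_congr hΩ (fun s y hq => partialX_auxIntegral hf₂ hΩ hu hq) hq]
  refine (hasDerivAt_auxIntegral_partialX (hf.differentiable (by norm_num) _)
    (hf₂.differentiable_deriv_two _) (hf'' _) (hasDerivAt_partialX hΩ hu (by norm_num) hq)
    (hasDerivAt_partialX hΩ hu₁ (by norm_num) hq) (hasDerivAt_partialX hΩ hu₂ (by norm_num) hq)
    (hasDerivAt_partialX hΩ hu₃ (by norm_num) hq)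
    (hasDerivAt_partialX hΩ hu₄ (by norm_num) hq)).deriv.trans ?_
  ring

lemma partialT_auxIntegral (hf : ContDiff ℝ 3 f) (hΩ : IsOpen Ω)
    (hu : ContDiffOn ℝ 5 (uncurry u) Ω)
    (heq : ∀ t x, (t, x) ∈ Ω → partialT u t x = partialX (partialX u) t x + f (u t x))
    (hq : (t, x) ∈ Ω) :
    partialT (auxIntegral f u) t x
      = partialX u t x * partialX (partialX (partialX (partialX (partialX u)))) t x
        + partialX (partialX (partialX u)) t x ^ 2
        - 2 * partialX (partialX u) t x * partialX (partialX (partialX (partialX u))) t x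
        - f (u t x) * partialX (partialX (partialX (partialX u))) t x
        + deriv (deriv (deriv f)) (u t x) * partialX u t x ^ 4
        + 2 * deriv (deriv f) (u t x) * partialX u t x ^ 2 * partialX (partialX u) t x
        + 4 * deriv f (u t x) * partialX u t x * partialX (partialX (partialX u)) t x
        - 3 * deriv f (u t x) * partialX (partialX u) t x ^ 2
        - 2 * f (u t x) * deriv f (u t x) * partialX (partialX u) t x
        + 2 * deriv f (u t x) ^ 2 * partialX u t x ^ 2 := by
  obtain ⟨hu₁, hu₂, hu₃, -⟩ := contDiffOn_uncurry_partialX_iterates hΩ hu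
  refine (hasDerivAt_auxIntegral (hf.differentiable (by norm_num) _)
    ((hf.of_le (by norm_num)).differentiable_deriv_two _)
    (hasDerivAt_partialT hΩ hu (by norm_num) hq) (hasDerivAt_partialT hΩ hu₁ (by norm_num) hq)
    (hasDerivAt_partialT hΩ hu₂ (by norm_num) hq)
    (hasDerivAt_partialT hΩ hu₃ (by norm_num) hq)).deriv.trans ?_
  rw [heq t x hq, partialT_partialX_of_reactionDiffusion hf hΩ hu heq hq,
    partialT_partialX_partialX_of_reactionDiffusion hf hΩ hu heq hq,
    partialT_partialX_partialX_partialX_of_reactionDiffusion hf hΩ hu heq hq]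
  ring

end ReactionDiffusion

/-- Let `u` be a C⁵ solution of the reaction–diffusion equation
`u_t = u_xx + f(u)` on an open set `Ω ⊆ ℝ²` (with `f` of class C³), and let
`g = u_x·u_xxx − u_xx² − f(u)·u_xx + f'(u)·u_x²`. Then wherever `u_x ≠ 0` on `Ω`,
`g_t = g_xx − (2·u_xx/u_x)·g_x + (2·f'(u) + 2·u_xxx/u_x)·g`; hence `g = 0` is a
compatible differential constraint (auxiliary integral) for arbitrary `f`. -/
theorem stmt_9 (f : ℝ → ℝ) (hf : ContDiff ℝ 3 f)
    (Ω : Set (ℝ × ℝ)) (hΩ : IsOpen Ω) (u : ℝ → ℝ → ℝ)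
    (hu : ContDiffOn ℝ 5 (fun p : ℝ × ℝ => u p.1 p.2) Ω)
    (heq : ∀ t x : ℝ, (t, x) ∈ Ω →
      partialT u t x = partialX (partialX u) t x + f (u t x))
    (g : ℝ → ℝ → ℝ)
    (hg : ∀ t x : ℝ,
      g t x = partialX u t x * partialX (partialX (partialX u)) t x
        - (partialX (partialX u) t x) ^ 2
        - f (u t x) * partialX (partialX u) t x
        + deriv f (u t x) * (partialX u t x) ^ 2) :
    ∀ t x : ℝ, (t, x) ∈ Ω → partialX u t x ≠ 0 →
      partialT g t x
        = partialX (partialX g) t x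
          - (2 * partialX (partialX u) t x / partialX u t x) * partialX g t x
          + (2 * deriv f (u t x)
              + 2 * partialX (partialX (partialX u)) t x / partialX u t x) * g t x := by
  intro t x hq hux
  obtain rfl : g = auxIntegral f u := funext fun t => funext (hg t)
  rw [partialT_auxIntegral hf hΩ hu heq hq, partialX_partialX_auxIntegral hf hΩ hu hq,
    partialX_auxIntegral (hf.of_le (by norm_num)) hΩ hu hq, auxIntegral]
  field_simp
  ring
end

section
/- Let f₁, f₂ : ℝ → ℝ be of class C² and g₁, g₂ : ℝ → ℝ be of class C¹, and define u(t,x) = f₁(t)·g₁(x) + f₂(t)·g₂(x). Then with p = f₁, at every point (t,x) ∈ ℝ²: (∂_t∂_x u · u − ∂_t u · ∂_x u)·p''(t) + (∂_x u · ∂_t² u − ∂_t²∂_x u · u)·p'(t) + (∂_t²∂_x u · ∂_t u − ∂_t² u · ∂_t∂_x u)·p(t) = 0. -/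
section SeparatedSum

variable {ι : Type*} (s : Finset ι) {f g : ι → ℝ → ℝ}

theorem partialT_sum_mul (hf : ∀ i, Differentiable ℝ (f i)) :
    partialT (fun t x => ∑ i ∈ s, f i t * g i x) = fun t x => ∑ i ∈ s, deriv (f i) t * g i x := by
  funext t x
  simp only [partialT]
  rw [deriv_fun_sum fun i _ => (hf i t).mul_const _]
  simp only [deriv_mul_const (hf _ t)]

theorem partialX_sum_mul (hg : ∀ i, Differentiable ℝ (g i)) :
    partialX (fun t x => ∑ i ∈ s, f i t * g i x) = fun t x => ∑ i ∈ s, f i t * deriv (g i) x := by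
  funext t x
  simp only [partialX]
  rw [deriv_fun_sum fun i _ => (hg i x).const_mul _]
  simp only [deriv_const_mul _ (hg _ x)]

end SeparatedSum

/-- For the two-term separation ansatz
`u(t,x) = f₁(t)·g₁(x) + f₂(t)·g₂(x)` (with `f₁, f₂` of class C² and `g₁, g₂` of
class C¹), the mixed ansatz-constraint
`(u_tx·u − u_t·u_x)·p'' + (u_x·u_tt − u_ttx·u)·p' + (u_ttx·u_t − u_tt·u_tx)·p = 0`
holds everywhere with `p = f₁`. -/
theorem stmt_14 (f₁ f₂ g₁ g₂ : ℝ → ℝ)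
    (hf₁ : ContDiff ℝ 2 f₁) (hf₂ : ContDiff ℝ 2 f₂)
    (hg₁ : ContDiff ℝ 1 g₁) (hg₂ : ContDiff ℝ 1 g₂)
    (u : ℝ → ℝ → ℝ) (hu : ∀ t x : ℝ, u t x = f₁ t * g₁ x + f₂ t * g₂ x) :
    ∀ t x : ℝ,
      (partialT (partialX u) t x * u t x - partialT u t x * partialX u t x)
          * deriv (deriv f₁) t
      + (partialX u t x * partialT (partialT u) t x
          - partialT (partialT (partialX u)) t x * u t x) * deriv f₁ t
      + (partialT (partialT (partialX u)) t x * partialT u t x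
          - partialT (partialT u) t x * partialT (partialX u) t x) * f₁ t = 0 := by
  set F : Fin 2 → ℝ → ℝ := ![f₁, f₂]
  set G : Fin 2 → ℝ → ℝ := ![g₁, g₂]
  have hF : ∀ i, Differentiable ℝ (F i) := by
    simp only [Fin.forall_fin_two]
    exact ⟨hf₁.differentiable two_ne_zero, hf₂.differentiable two_ne_zero⟩
  have hF' : ∀ i, Differentiable ℝ (deriv (F i)) := by
    simp only [Fin.forall_fin_two]
    exact ⟨(hf₁.iterate_deriv' 1 1).differentiable one_ne_zero,
      (hf₂.iterate_deriv' 1 1).differentiable one_ne_zero⟩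
  have hG : ∀ i, Differentiable ℝ (G i) := by
    simp only [Fin.forall_fin_two]
    exact ⟨hg₁.differentiable one_ne_zero, hg₂.differentiable one_ne_zero⟩
  obtain rfl : u = fun t x => ∑ i, F i t * G i x := by
    funext t x
    simp [hu, F, G, Fin.sum_univ_two]
  intro t x
  simp only [partialX_sum_mul _ hG, partialT_sum_mul _ hF, partialT_sum_mul _ hF']
  simp only [Fin.sum_univ_two, F, G, Matrix.cons_val_zero, Matrix.cons_val_one]
  ring
end
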